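/- arXiv:1112.2751 — 5 statements merged into one kernel-verified Lean document; each statement's English description precedes it below -/
import Mathlib

section
/- Let (ξ_n)_{n∈ℤ} be a stationary Markov chain, X_i = f(ξ_i) with f ∈ L^p₀(π), p ≥ 1, and for fixed n define θ_k^n = (1/n)·Σ_{i=0}^{n−1} 𝔼_k(X_k + ⋯ + X_{k+i}), D_k^n = θ_k^n − 𝔼_{k−1}(θ_k^n), and M_n^n = Σ_{i=1}^n D_i^n. Then ‖M_n^n‖_p ≤ ‖S_n‖_p + 3·max_{1≤i≤n} ‖𝔼₀(S_i)‖_p. -/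
/-!
Write `V_k^m = X_{k+1} + ⋯ + X_{k+m}` and `G_k = (1/n) ∑_{i<n} 𝔼_k V_k^i`. Since `X_k` is
`𝓕_k`-measurable, `θ_k = X_k + G_k`, and by the tower property
`𝔼_{k-1} θ_k = (1/n) ∑_{i<n} 𝔼_{k-1} V_{k-1}^{i+1}`
`= θ_{k-1} - X_{k-1} + (1/n) 𝔼_{k-1} V_{k-1}^n`.
Summing `D_k = θ_k - 𝔼_{k-1} θ_k` over `k = 1, …, n` telescopes to
`M_n^n = S_n + G_n - G_0 - (1/n) ∑_{j<n} 𝔼_j V_j^n`.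
By stationarity the path `(ξ_{k+i})_i` has the same law for every `k`, so
`‖𝔼_k V_k^m‖_p = ‖𝔼_0 S_m‖_p`; hence each of the last three terms is an average of quantities
bounded by `max_{i ≤ n} ‖𝔼_0 S_i‖_p`, and Minkowski's inequality concludes.
-/

open MeasureTheory ProbabilityTheory Filter Finset
open scoped ENNReal NNReal Topology

/-- The σ-algebra `𝓕_k` generated by `ξ_i`, `i ≤ k`. -/
def pastFiltration {Ω S : Type*} [MeasurableSpace Ω] [MeasurableSpace S]
    (ξ : ℤ → Ω → S) (k : ℤ) : MeasurableSpace Ω :=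
  ⨆ i ≤ k, MeasurableSpace.comap (ξ i) inferInstance

/-- Partial sums `S_n = X_1 + ⋯ + X_n` with `X_i = f(ξ_i)`. -/
noncomputable def Spart {Ω S : Type*} (ξ : ℤ → Ω → S) (f : S → ℝ) (n : ℕ) (ω : Ω) : ℝ :=
  ∑ i ∈ Finset.Icc 1 n, f (ξ (i : ℤ) ω)

/-- `θ_k^n = (1/n) ∑_{i=0}^{n-1} 𝔼_k(X_k + ⋯ + X_{k+i})`. -/
noncomputable def thetaF {Ω S : Type*} [MeasurableSpace Ω] [MeasurableSpace S]
    (P : Measure Ω) (ξ : ℤ → Ω → S) (f : S → ℝ) (n : ℕ) (k : ℤ) (ω : Ω) : ℝ :=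
  (1 / (n : ℝ)) * ∑ i ∈ Finset.range n,
    (P[fun ω' => ∑ j ∈ Finset.range (i + 1), f (ξ (k + (j : ℤ)) ω') |
        pastFiltration ξ k]) ω

/-- `D_k^n = θ_k^n - 𝔼_{k-1}(θ_k^n)`. -/
noncomputable def Dmart {Ω S : Type*} [MeasurableSpace Ω] [MeasurableSpace S]
    (P : Measure Ω) (ξ : ℤ → Ω → S) (f : S → ℝ) (n : ℕ) (k : ℤ) (ω : Ω) : ℝ :=
  thetaF P ξ f n k ω - (P[thetaF P ξ f n k | pastFiltration ξ (k - 1)]) ω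

section PathSpace

variable {Ω S : Type*} [MeasurableSpace Ω] [MeasurableSpace S] {ξ : ℤ → Ω → S}

lemma pastFiltration_le (hmeas : ∀ i, Measurable (ξ i)) (k : ℤ) :
    pastFiltration ξ k ≤ ‹MeasurableSpace Ω› :=
  iSup₂_le fun i _ => (hmeas i).comap_le

lemma pastFiltration_mono : Monotone (pastFiltration ξ) :=
  fun _ _ hjk => iSup₂_le fun i hi => le_iSup₂_of_le i (hi.trans hjk) le_rfl

lemma measurable_comp_pastFiltration {f : S → ℝ} (hf : Measurable f) (k : ℤ) :
    Measurable[pastFiltration ξ k] fun ω => f (ξ k ω) :=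
  hf.comp (Measurable.of_comap_le (le_iSup₂_of_le k le_rfl le_rfl))

def shiftedPath (ξ : ℤ → Ω → S) (k : ℤ) (ω : Ω) : ℤ → S := fun i => ξ (i + k) ω

lemma measurable_shiftedPath (hmeas : ∀ i, Measurable (ξ i)) (k : ℤ) :
    Measurable (shiftedPath ξ k) :=
  measurable_pi_lambda _ fun _ => hmeas _

lemma comap_shiftedPath_pastFiltration (k : ℤ) :
    MeasurableSpace.comap (shiftedPath ξ k) (pastFiltration (fun i (x : ℤ → S) => x i) 0) =
      pastFiltration ξ k := by
  simp only [pastFiltration, MeasurableSpace.comap_iSup, MeasurableSpace.comap_comp]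
  apply le_antisymm
  · exact iSup₂_le fun i hi => le_iSup₂_of_le (i + k) (by omega) le_rfl
  · refine iSup₂_le fun j hj => le_iSup₂_of_le (j - k) (by omega) ?_
    simp [Function.comp_def, shiftedPath]

lemma map_shiftedPath_eq
    (P : Measure Ω) [IsFiniteMeasure P] (hmeas : ∀ i, Measurable (ξ i))
    (hstat : ∀ (m : ℕ) (t : Fin m → ℤ) (k : ℤ),
      P.map (fun ω i => ξ (t i + k) ω) = P.map (fun ω (i : Fin m) => ξ (t i) ω))
    (k : ℤ) :
    P.map (shiftedPath ξ k) = P.map (shiftedPath ξ 0) := by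
  refine (map_eq_iff_forall_finset_map_restrict_eq
    (measurable_shiftedPath hmeas k).aemeasurable
    (measurable_shiftedPath hmeas 0).aemeasurable).mpr fun J => ?_
  set e := J.equivFin
  let t : Fin J.card → ℤ := fun j => e.symm j
  let r : (Fin J.card → S) → (J → S) := fun v i => v (e i)
  have hr : Measurable r := measurable_pi_lambda _ fun _ => measurable_pi_apply _
  have hrestrict : ∀ l : ℤ, (fun ω => J.restrict (shiftedPath ξ l ω)) =
      r ∘ fun ω j => ξ (t j + l) ω := by
    intro l; ext ω i; simp [r, t, shiftedPath]
  rw [hrestrict, hrestrict, ← Measure.map_map hr (measurable_pi_lambda _ fun _ => hmeas _),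
    ← Measure.map_map hr (measurable_pi_lambda _ fun _ => hmeas _), hstat]
  simp

end PathSpace

section FactorMap

variable {Ω Γ : Type*} [MeasurableSpace Ω] {m : MeasurableSpace Γ} [mΓ : MeasurableSpace Γ]
  {P : Measure Ω} [IsFiniteMeasure P] {T : Ω → Γ} {g : Γ → ℝ}

lemma condExp_comp_ae_eq (hT : Measurable T) (hm : m ≤ mΓ) (hg : StronglyMeasurable g)
    (hgi : Integrable g (P.map T)) :
    (fun ω => ((P.map T)[g | m]) (T ω)) =ᵐ[P] P[g ∘ T | m.comap T] := by
  have hce : AEStronglyMeasurable ((P.map T)[g | m]) (P.map T) :=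
    (stronglyMeasurable_condExp.mono hm).aestronglyMeasurable
  refine ae_eq_condExp_of_forall_setIntegral_eq
    ((MeasurableSpace.comap_mono hm).trans hT.comap_le)
    ((integrable_map_measure hg.aestronglyMeasurable hT.aemeasurable).mp hgi)
    (fun _ _ _ =>
      ((integrable_map_measure hce hT.aemeasurable).mp integrable_condExp).integrableOn)
    ?_ (stronglyMeasurable_condExp.comp_measurable (comap_measurable T)).aestronglyMeasurable
  rintro _ ⟨B, hB, rfl⟩ -
  calc ∫ ω in T ⁻¹' B, ((P.map T)[g | m]) (T ω) ∂P
      = ∫ y in B, ((P.map T)[g | m]) y ∂(P.map T) :=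
        (setIntegral_map (hm B hB) hce hT.aemeasurable).symm
    _ = ∫ y in B, g y ∂(P.map T) := setIntegral_condExp hm hgi hB
    _ = ∫ ω in T ⁻¹' B, (g ∘ T) ω ∂P :=
        setIntegral_map (hm B hB) hg.aestronglyMeasurable hT.aemeasurable

lemma eLpNorm_condExp_comp (hT : Measurable T) (hm : m ≤ mΓ) (hg : StronglyMeasurable g)
    (hgi : Integrable g (P.map T)) (q : ℝ≥0∞) :
    eLpNorm (P[g ∘ T | m.comap T]) q P = eLpNorm ((P.map T)[g | m]) q (P.map T) := by
  rw [← eLpNorm_congr_ae (condExp_comp_ae_eq hT hm hg hgi),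
    eLpNorm_map_measure (stronglyMeasurable_condExp.mono hm).aestronglyMeasurable
      hT.aemeasurable]
  rfl

end FactorMap

section Blocks

variable {Ω S : Type*} {ξ : ℤ → Ω → S} {f : S → ℝ}

noncomputable def blockSum (f : S → ℝ) (m : ℕ) (x : ℤ → S) : ℝ :=
  ∑ j ∈ range m, f (x (j + 1))

lemma Spart_eq_sum_range (m : ℕ) (ω : Ω) :
    Spart ξ f m ω = ∑ j ∈ range m, f (ξ ((j : ℤ) + 1) ω) := by
  rw [Spart, ← Finset.Ico_add_one_right_eq_Icc, Finset.sum_Ico_eq_sum_range]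
  simp [add_comm]

lemma Spart_eq_blockSum_comp (m : ℕ) : Spart ξ f m = blockSum f m ∘ shiftedPath ξ 0 := by
  ext ω
  simp [Spart_eq_sum_range, blockSum, shiftedPath]

lemma sum_range_succ_eq_add_blockSum (k : ℤ) (i : ℕ) :
    (fun ω => ∑ j ∈ range (i + 1), f (ξ (k + (j : ℤ)) ω)) =
      (fun ω => f (ξ k ω)) + blockSum f i ∘ shiftedPath ξ k := by
  ext ω
  simp [sum_range_succ', blockSum, shiftedPath, add_comm]

lemma sum_range_succ_eq_blockSum_comp (k : ℤ) (i : ℕ) :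
    (fun ω => ∑ j ∈ range (i + 1), f (ξ (k + (j : ℤ)) ω)) =
      blockSum f (i + 1) ∘ shiftedPath ξ (k - 1) := by
  ext ω
  refine sum_congr rfl fun j _ => ?_
  congr 2
  ring

variable [MeasurableSpace Ω] {P : Measure Ω}

lemma integrable_blockSum_comp (hint : ∀ i, Integrable (fun ω => f (ξ i ω)) P) (k : ℤ)
    (m : ℕ) : Integrable (blockSum f m ∘ shiftedPath ξ k) P :=
  integrable_finsetSum (range m) fun j _ => hint ((j : ℤ) + 1 + k)

variable [MeasurableSpace S]

/-- `𝔼_k(X_{k+1} + ⋯ + X_{k+m})`. -/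
noncomputable def condBlock (P : Measure Ω) (ξ : ℤ → Ω → S) (f : S → ℝ) (k : ℤ) (m : ℕ) :
    Ω → ℝ :=
  P[blockSum f m ∘ shiftedPath ξ k | pastFiltration ξ k]

lemma measurable_blockSum (hf : Measurable f) (m : ℕ) : Measurable (blockSum f m) :=
  Finset.measurable_sum _ fun _ _ => hf.comp (measurable_pi_apply _)

lemma measurable_Spart (hmeas : ∀ i, Measurable (ξ i)) (hf : Measurable f) (m : ℕ) :
    Measurable (Spart ξ f m) := by
  rw [Spart_eq_blockSum_comp]
  exact (measurable_blockSum hf m).comp (measurable_shiftedPath hmeas 0)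

lemma condBlock_zero (k : ℤ) : condBlock P ξ f k 0 = 0 := by
  have h0 : blockSum f 0 ∘ shiftedPath ξ k = (0 : Ω → ℝ) := by ext; simp [blockSum]
  rw [condBlock, h0, condExp_zero]

lemma aestronglyMeasurable_condBlock (hmeas : ∀ i, Measurable (ξ i)) (k : ℤ) (m : ℕ) :
    AEStronglyMeasurable (condBlock P ξ f k m) P :=
  (stronglyMeasurable_condExp.mono (pastFiltration_le hmeas k)).aestronglyMeasurable

/-- Both sides are the norm of `𝔼[blockSum f m | past]` under the common law of the
shifted paths. -/
lemma eLpNorm_condBlock [IsFiniteMeasure P] (hmeas : ∀ i, Measurable (ξ i))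
    (hstat : ∀ (m : ℕ) (t : Fin m → ℤ) (k : ℤ),
      P.map (fun ω i => ξ (t i + k) ω) = P.map (fun ω (i : Fin m) => ξ (t i) ω))
    (hf : Measurable f) (hint : ∀ i, Integrable (fun ω => f (ξ i ω)) P) (q : ℝ≥0∞)
    (k : ℤ) (m : ℕ) :
    eLpNorm (condBlock P ξ f k m) q P = eLpNorm (P[Spart ξ f m | pastFiltration ξ 0]) q P := by
  have hpast := pastFiltration_le (ξ := fun i (x : ℤ → S) => x i) measurable_pi_apply 0
  have key : ∀ l : ℤ, eLpNorm (condBlock P ξ f l m) q P =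
      eLpNorm ((P.map (shiftedPath ξ 0))[blockSum f m |
        pastFiltration (fun i (x : ℤ → S) => x i) 0]) q (P.map (shiftedPath ξ 0)) := by
    intro l
    have hgi : Integrable (blockSum f m) (P.map (shiftedPath ξ l)) :=
      (integrable_map_measure (measurable_blockSum hf m).aestronglyMeasurable
        (measurable_shiftedPath hmeas l).aemeasurable).mpr (integrable_blockSum_comp hint l m)
    rw [condBlock, ← comap_shiftedPath_pastFiltration,
      eLpNorm_condExp_comp (measurable_shiftedPath hmeas l) hpast
        (measurable_blockSum hf m).stronglyMeasurable hgi,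
      map_shiftedPath_eq P hmeas hstat l]
  rw [key k, Spart_eq_blockSum_comp, ← condBlock, key 0]

end Blocks

section Decomposition

variable {Ω S : Type*} [MeasurableSpace Ω] [MeasurableSpace S] {P : Measure Ω}
  [IsFiniteMeasure P] {ξ : ℤ → Ω → S} {f : S → ℝ} {n : ℕ}

/-- `G_k = (1/n) ∑_{i<n} 𝔼_k(X_{k+1} + ⋯ + X_{k+i})`, so that `θ_k^n = X_k + G_k`. -/
noncomputable def condBlockAvg (P : Measure Ω) (ξ : ℤ → Ω → S) (f : S → ℝ) (n : ℕ) (k : ℤ)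
    (ω : Ω) : ℝ :=
  (1 / (n : ℝ)) * ∑ i ∈ range n, condBlock P ξ f k i ω

variable (hmeas : ∀ i, Measurable (ξ i))
include hmeas

lemma condExp_thetaF_ae_eq (k : ℤ) :
    P[thetaF P ξ f n k | pastFiltration ξ (k - 1)] =ᵐ[P]
      fun ω => (1 / (n : ℝ)) * ∑ i ∈ range n, condBlock P ξ f (k - 1) (i + 1) ω := by
  have hθ : thetaF P ξ f n k = (1 / (n : ℝ)) • ∑ i ∈ range n,
      P[blockSum f (i + 1) ∘ shiftedPath ξ (k - 1) | pastFiltration ξ k] := by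
    ext ω
    simp [thetaF, sum_range_succ_eq_blockSum_comp, Finset.sum_apply]
  have htower : ∀ i : ℕ,
      P[P[blockSum f (i + 1) ∘ shiftedPath ξ (k - 1) | pastFiltration ξ k] |
        pastFiltration ξ (k - 1)] =ᵐ[P] condBlock P ξ f (k - 1) (i + 1) := fun i =>
    condExp_condExp_of_le (pastFiltration_mono (by omega)) (pastFiltration_le hmeas k)
  rw [hθ]
  refine (condExp_smul _ _ _).trans ?_
  filter_upwards [condExp_finsetSum (s := range n)
    (fun i _ => integrable_condExp (m := pastFiltration ξ k) (μ := P)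
      (f := blockSum f (i + 1) ∘ shiftedPath ξ (k - 1))) (pastFiltration ξ (k - 1)),
    ae_all_iff.mpr htower] with ω hsum htower
  simp only [Pi.smul_apply, smul_eq_mul, hsum, Finset.sum_apply, htower]

variable (hint : ∀ i, Integrable (fun ω => f (ξ i ω)) P)
include hint

lemma thetaF_ae_eq (hf : Measurable f) (hn : n ≠ 0) (k : ℤ) :
    thetaF P ξ f n k =ᵐ[P] fun ω => f (ξ k ω) + condBlockAvg P ξ f n k ω := by
  have hX : P[fun ω => f (ξ k ω) | pastFiltration ξ k] = fun ω => f (ξ k ω) :=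
    condExp_of_stronglyMeasurable (pastFiltration_le hmeas k)
      (measurable_comp_pastFiltration hf k).stronglyMeasurable (hint k)
  have hsplit : ∀ i : ℕ,
      P[fun ω => ∑ j ∈ range (i + 1), f (ξ (k + (j : ℤ)) ω) | pastFiltration ξ k] =ᵐ[P]
        (fun ω => f (ξ k ω)) + condBlock P ξ f k i := by
    intro i
    rw [sum_range_succ_eq_add_blockSum]
    refine (condExp_add (hint k) (integrable_blockSum_comp hint k i) _).trans ?_
    rw [hX]
    rfl
  filter_upwards [ae_all_iff.mpr hsplit] with ω hω
  simp only [thetaF, condBlockAvg, hω, Pi.add_apply, sum_add_distrib, sum_const, card_range,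
    nsmul_eq_mul]
  field_simp

lemma Dmart_ae_eq (hf : Measurable f) (hn : n ≠ 0) (k : ℤ) :
    Dmart P ξ f n k =ᵐ[P] fun ω => thetaF P ξ f n k ω - thetaF P ξ f n (k - 1) ω +
      f (ξ (k - 1) ω) - (1 / (n : ℝ)) * condBlock P ξ f (k - 1) n ω := by
  filter_upwards [condExp_thetaF_ae_eq hmeas k, thetaF_ae_eq hmeas hint hf hn (k - 1)]
    with ω hE hθ
  have htel := (sum_range_succ' (fun i => condBlock P ξ f (k - 1) i ω) n).symm.trans
    (sum_range_succ _ n)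
  rw [condBlock_zero, Pi.zero_apply] at htel
  rw [Dmart, hE, hθ, condBlockAvg]
  linear_combination (-(1 / (n : ℝ))) * htel

lemma sum_Dmart_ae_eq (hf : Measurable f) (hn : n ≠ 0) :
    (fun ω => ∑ i ∈ Icc 1 n, Dmart P ξ f n i ω) =ᵐ[P] fun ω =>
      Spart ξ f n ω + condBlockAvg P ξ f n n ω - condBlockAvg P ξ f n 0 ω -
        (1 / (n : ℝ)) * ∑ j ∈ range n, condBlock P ξ f j n ω := by
  filter_upwards [ae_all_iff.mpr (Dmart_ae_eq hmeas hint hf hn),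
    thetaF_ae_eq hmeas hint hf hn n, thetaF_ae_eq hmeas hint hf hn 0] with ω hD hθn hθ0
  have hθ := sum_range_sub (fun j : ℕ => thetaF P ξ f n j ω) n
  have hX := (sum_range_succ' (fun j : ℕ => f (ξ j ω)) n).symm.trans (sum_range_succ _ n)
  rw [← Finset.Ico_add_one_right_eq_Icc, Finset.sum_Ico_eq_sum_range, add_tsub_cancel_right]
  simp only [Nat.cast_add, Nat.cast_one, add_comm 1, hD, add_sub_cancel_right, sum_sub_distrib,
    sum_add_distrib, ← mul_sum, Spart_eq_sum_range] at hθ hX ⊢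
  push_cast at hθ hX
  linear_combination hθ + hθn - hθ0 - hX

end Decomposition

section Norms

variable {α : Type*} [MeasurableSpace α] {μ : Measure α} {q : ℝ≥0∞}

lemma eLpNorm_average_le (hq : 1 ≤ q) {n : ℕ} {g : ℕ → α → ℝ} {B : ℝ≥0∞}
    (hg : ∀ i ∈ range n, AEStronglyMeasurable (g i) μ)
    (hB : ∀ i ∈ range n, eLpNorm (g i) q μ ≤ B) :
    eLpNorm (fun x => (1 / (n : ℝ)) * ∑ i ∈ range n, g i x) q μ ≤ B := by
  rcases n.eq_zero_or_pos with rfl | hn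
  · simp
  have hsmul : (fun x => (1 / (n : ℝ)) * ∑ i ∈ range n, g i x) =
      (1 / (n : ℝ)) • ∑ i ∈ range n, g i := by
    ext x
    simp [Finset.sum_apply]
  have hcancel : ‖(1 / (n : ℝ))‖ₑ * n = 1 := by
    rw [one_div, enorm_inv (by positivity), Real.enorm_natCast]
    exact ENNReal.inv_mul_cancel (by exact_mod_cast hn.ne') (ENNReal.natCast_ne_top n)
  rw [hsmul, eLpNorm_const_smul]
  calc ‖(1 / (n : ℝ))‖ₑ * eLpNorm (∑ i ∈ range n, g i) q μ
      ≤ ‖(1 / (n : ℝ))‖ₑ * ∑ i ∈ range n, eLpNorm (g i) q μ := by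
        gcongr
        exact eLpNorm_sum_le hg hq
    _ ≤ ‖(1 / (n : ℝ))‖ₑ * (n * B) := by
        gcongr
        simpa using Finset.sum_le_card_nsmul _ _ _ hB
    _ = B := by rw [← mul_assoc, hcancel, one_mul]

lemma eLpNorm_add_sub_sub_le (hq : 1 ≤ q) {a b c d : α → ℝ} (ha : AEStronglyMeasurable a μ)
    (hb : AEStronglyMeasurable b μ) (hc : AEStronglyMeasurable c μ)
    (hd : AEStronglyMeasurable d μ) :
    eLpNorm (fun x => a x + b x - c x - d x) q μ ≤
      eLpNorm a q μ + eLpNorm b q μ + eLpNorm c q μ + eLpNorm d q μ :=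
  calc eLpNorm (a + b - c - d) q μ
      ≤ eLpNorm (a + b - c) q μ + eLpNorm d q μ :=
        eLpNorm_sub_le ((ha.add hb).sub hc) hd hq
    _ ≤ eLpNorm (a + b) q μ + eLpNorm c q μ + eLpNorm d q μ := by
        gcongr
        exact eLpNorm_sub_le (ha.add hb) hc hq
    _ ≤ _ := by
        gcongr
        exact eLpNorm_add_le ha hb hq

end Norms

lemma eLpNorm_condExp_Spart_le_sup {Ω S : Type*} [MeasurableSpace Ω] [MeasurableSpace S]
    {P : Measure Ω} {ξ : ℤ → Ω → S} {f : S → ℝ} {q : ℝ≥0∞} {m n : ℕ} (hmn : m ≤ n) :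
    eLpNorm (P[Spart ξ f m | pastFiltration ξ 0]) q P ≤
      (Icc 1 n).sup fun i => eLpNorm (P[Spart ξ f i | pastFiltration ξ 0]) q P := by
  rcases m.eq_zero_or_pos with rfl | hm
  · have h0 : Spart ξ f 0 = 0 := by ext; simp [Spart]
    simp [h0]
  · exact Finset.le_sup (f := fun i => eLpNorm (P[Spart ξ f i | pastFiltration ξ 0]) q P)
      (mem_Icc.mpr ⟨hm, hmn⟩)

theorem statement12_general
    {Ω : Type*} [MeasurableSpace Ω] (P : Measure Ω) [IsProbabilityMeasure P]
    {S : Type*} [MeasurableSpace S]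
    (ξ : ℤ → Ω → S) (π : Measure S)
    (hmeas : ∀ i, Measurable (ξ i))
    (hmarg : ∀ i, P.map (ξ i) = π)
    (hstat : ∀ (m : ℕ) (t : Fin m → ℤ) (k : ℤ),
      P.map (fun ω i => ξ (t i + k) ω) = P.map (fun ω (i : Fin m) => ξ (t i) ω))
    (p : ℝ) (hp : 1 ≤ p)
    (f : S → ℝ) (hf : Measurable f)
    (hfp : MemLp f (ENNReal.ofReal p) π)
    (n : ℕ) (hn : 1 ≤ n) :
    eLpNorm (fun ω => ∑ i ∈ Finset.Icc 1 n, Dmart P ξ f n (i : ℤ) ω)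
        (ENNReal.ofReal p) P ≤
      eLpNorm (Spart ξ f n) (ENNReal.ofReal p) P +
        3 * (Finset.Icc 1 n).sup
          (fun i => eLpNorm (P[Spart ξ f i | pastFiltration ξ 0]) (ENNReal.ofReal p) P) := by
  set q := ENNReal.ofReal p
  set B := (Icc 1 n).sup fun i => eLpNorm (P[Spart ξ f i | pastFiltration ξ 0]) q P
  have hq : 1 ≤ q := ENNReal.one_le_ofReal.mpr hp
  have hint : ∀ i, Integrable (fun ω => f (ξ i ω)) P := fun i =>
    (integrable_map_measure hf.aestronglyMeasurable (hmeas i).aemeasurable).mp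
      (((hmarg i).symm ▸ hfp : MemLp f q (P.map (ξ i))).integrable hq)
  have hcond : ∀ k m, m ≤ n → eLpNorm (condBlock P ξ f k m) q P ≤ B := fun k m hm =>
    (eLpNorm_condBlock hmeas hstat hf hint q k m).trans_le (eLpNorm_condExp_Spart_le_sup hm)
  have hsm := aestronglyMeasurable_condBlock (P := P) (f := f) hmeas
  have havg : ∀ g : ℕ → Ω → ℝ, (∀ i, AEStronglyMeasurable (g i) P) →
      AEStronglyMeasurable (fun ω => (1 / (n : ℝ)) * ∑ i ∈ range n, g i ω) P := fun g hg =>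
    (Finset.aestronglyMeasurable_fun_sum _ fun i _ => hg i).const_mul _
  rw [eLpNorm_congr_ae (sum_Dmart_ae_eq hmeas hint hf (by omega))]
  calc _ ≤ eLpNorm (Spart ξ f n) q P + eLpNorm (condBlockAvg P ξ f n n) q P +
        eLpNorm (condBlockAvg P ξ f n 0) q P +
        eLpNorm (fun ω => (1 / (n : ℝ)) * ∑ j ∈ range n, condBlock P ξ f j n ω) q P :=
        eLpNorm_add_sub_sub_le hq (measurable_Spart hmeas hf n).aestronglyMeasurable
          (havg _ (hsm n)) (havg _ (hsm 0))
          (havg (fun j => condBlock P ξ f j n) fun j => hsm j n)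
    _ ≤ eLpNorm (Spart ξ f n) q P + B + B + B := by
        gcongr
        · exact eLpNorm_average_le hq (fun i _ => hsm n i)
            fun i hi => hcond n i (mem_range.mp hi).le
        · exact eLpNorm_average_le hq (fun i _ => hsm 0 i)
            fun i hi => hcond 0 i (mem_range.mp hi).le
        · exact eLpNorm_average_le hq (fun j _ => hsm j n) fun j _ => hcond j n le_rfl
    _ = _ := by ring

/-- For a stationary Markov chain and `f ∈ 𝕃^p₀(π)`, `p ≥ 1`, with
`M_n^n = ∑_{i=1}^n D_i^n`: `‖M_n^n‖_p ≤ ‖S_n‖_p + 3 max_{1≤i≤n} ‖𝔼₀(S_i)‖_p`. -/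
theorem statement12
    {Ω : Type*} [MeasurableSpace Ω] (P : Measure Ω) [IsProbabilityMeasure P]
    {S : Type*} [MeasurableSpace S]
    (ξ : ℤ → Ω → S) (Q : Kernel S S) [IsMarkovKernel Q] (π : Measure S)
    [IsProbabilityMeasure π]
    (hmeas : ∀ i, Measurable (ξ i))
    (hmarg : ∀ i, P.map (ξ i) = π)
    (hMarkov : ∀ (k : ℤ) (A : Set S), MeasurableSet A →
      (P[fun ω => Set.indicator A (fun _ => (1 : ℝ)) (ξ (k + 1) ω) | pastFiltration ξ k])
        =ᵐ[P] fun ω => (Q (ξ k ω) A).toReal)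
    (hstat : ∀ (m : ℕ) (t : Fin m → ℤ) (k : ℤ),
      P.map (fun ω i => ξ (t i + k) ω) = P.map (fun ω (i : Fin m) => ξ (t i) ω))
    (p : ℝ) (hp : 1 ≤ p)
    (f : S → ℝ) (hf : Measurable f)
    (hfp : MemLp f (ENNReal.ofReal p) π) (hf0 : ∫ x, f x ∂π = 0)
    (n : ℕ) (hn : 1 ≤ n) :
    eLpNorm (fun ω => ∑ i ∈ Finset.Icc 1 n, Dmart P ξ f n (i : ℤ) ω)
        (ENNReal.ofReal p) P ≤
      eLpNorm (Spart ξ f n) (ENNReal.ofReal p) P +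
        3 * (Finset.Icc 1 n).sup
          (fun i => eLpNorm (P[Spart ξ f i | pastFiltration ξ 0]) (ENNReal.ofReal p) P) :=
  statement12_general P ξ π hmeas hmarg hstat p hp f hf hfp n hn
end

section
/- Let (M_i)_{0≤i≤n} be a martingale with M₀ = 0, integrable, with respect to a filtration (𝓕_i). Then for every x > 0: ℙ(max_{1≤i≤n} |M_i| > x) ≤ (2/x)·𝔼[|M_n|·1{|M_n| > x/2}]. -/
open MeasureTheory Finset
open scoped NNReal

/-! `(|M_i| - x/2)⁺` is a nonnegative submartingale, and `max_i |M_i| > x` forces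
`max_i (|M_i| - x/2)⁺ ≥ x/2`. Doob's maximal inequality at level `x/2` therefore bounds
`(x/2) ℙ(max_i |M_i| > x)` by `𝔼(|M_n| - x/2)⁺`, which is at most `𝔼[|M_n| 1{|M_n| > x/2}]`. -/

namespace MeasureTheory

variable {Ω : Type*} {m0 : MeasurableSpace Ω} {μ : Measure Ω}

theorem Martingale.submartingale_posPart_abs_sub {ι : Type*} [Preorder ι] [IsFiniteMeasure μ]
    {𝓕 : Filtration ι m0} {M : ι → Ω → ℝ} (hM : Martingale M 𝓕 μ) (c : ℝ) :
    Submartingale (fun i ω => max (|M i ω| - c) 0) 𝓕 μ :=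
  ((hM.submartingale.sup hM.neg.submartingale).sub_supermartingale
    (martingale_const 𝓕 μ c).supermartingale).pos

theorem Submartingale.mul_measureReal_le_integral [IsFiniteMeasure μ] {𝓕 : Filtration ℕ m0}
    {f : ℕ → Ω → ℝ} (hf : Submartingale f 𝓕 μ) (hf_nonneg : 0 ≤ f) {ε : ℝ} (hε : 0 ≤ ε)
    (n : ℕ) :
    ε * μ.real {ω | ε ≤ (range (n + 1)).sup' nonempty_range_add_one fun k => f k ω} ≤
      ∫ ω, f n ω ∂μ := by
  lift ε to ℝ≥0 using hε
  set A := {ω | (ε : ℝ) ≤ (range (n + 1)).sup' nonempty_range_add_one fun k => f k ω}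
  have hdoob := maximal_ineq hf hf_nonneg (ε := ε) n
  have hA : (ε : ℝ) * μ.real A ≤ ∫ ω in A, f n ω ∂μ := by
    have := ENNReal.toReal_mono ENNReal.ofReal_ne_top hdoob
    rwa [ENNReal.toReal_mul, ENNReal.toReal_ofReal (setIntegral_nonneg_of_ae
      (ae_of_all _ (hf_nonneg n))), ENNReal.coe_toReal] at this
  exact hA.trans (setIntegral_le_integral (hf.integrable n) (ae_of_all _ (hf_nonneg n)))

theorem integral_posPart_sub_le_setIntegral {X : Ω → ℝ} (hX : Integrable X μ) {c : ℝ}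
    (hc : 0 ≤ c) : ∫ ω, max (X ω - c) 0 ∂μ ≤ ∫ ω in {ω | c < X ω}, X ω ∂μ := by
  have hT : NullMeasurableSet {ω | c < X ω} μ :=
    nullMeasurableSet_lt aemeasurable_const hX.aemeasurable
  have hint : Integrable (fun ω => max (X ω - c) 0) μ :=
    hX.pos_part.mono (by fun_prop) (ae_of_all _ fun ω => by
      rw [Real.norm_eq_abs, Real.norm_eq_abs, abs_of_nonneg (le_max_right _ _),
        abs_of_nonneg (le_max_right _ _)]
      exact max_le_max (by linarith) le_rfl)
  rw [← integral_indicator₀ hT]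
  refine integral_mono hint (hX.indicator₀ hT) fun ω => ?_
  simp only [Set.indicator_apply, Set.mem_ofPred_eq]
  split_ifs with h <;> exact max_le (by linarith) (by linarith)

end MeasureTheory

theorem statement14_general
    {Ω : Type*} {m0 : MeasurableSpace Ω} (P : Measure Ω) [IsProbabilityMeasure P]
    (𝓕 : MeasureTheory.Filtration ℕ m0) (M : ℕ → Ω → ℝ)
    (hM : Martingale M 𝓕 P)
    (n : ℕ) (hn : 1 ≤ n) (x : ℝ) (hx : 0 < x) :
    (P {ω | x < (Finset.Icc 1 n).sup' (Finset.nonempty_Icc.mpr hn)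
        (fun i => |M i ω|)}).toReal ≤
      (2 / x) * ∫ ω in {ω | x / 2 < |M n ω|}, |M n ω| ∂P := by
  set f : ℕ → Ω → ℝ := fun i ω => max (|M i ω| - x / 2) 0
  have hexceed : ∀ {ω}, x < (Icc 1 n).sup' (nonempty_Icc.mpr hn) (fun i => |M i ω|) →
      x / 2 ≤ (range (n + 1)).sup' nonempty_range_add_one fun k => f k ω := by
    intro ω hω
    obtain ⟨i, hi, hix⟩ := (lt_sup'_iff _).mp hω
    exact (le_sup'_iff _).mpr ⟨i, mem_range.mpr (Nat.lt_succ_of_le (mem_Icc.mp hi).2),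
      le_max_of_le_left (by linarith)⟩
  have key : x / 2 * (P {ω | x < (Icc 1 n).sup' (nonempty_Icc.mpr hn)
      (fun i => |M i ω|)}).toReal ≤ ∫ ω in {ω | x / 2 < |M n ω|}, |M n ω| ∂P :=
    calc _ ≤ x / 2 * P.real {ω | x / 2 ≤ (range (n + 1)).sup' nonempty_range_add_one
          fun k => f k ω} := by
          rw [← measureReal_def]
          exact mul_le_mul_of_nonneg_left (measureReal_mono fun ω => hexceed) (by positivity)
      _ ≤ ∫ ω, f n ω ∂P :=
          (hM.submartingale_posPart_abs_sub (x / 2)).mul_measureReal_le_integral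
            (fun i ω => le_max_right _ _) (by positivity) n
      _ ≤ _ := integral_posPart_sub_le_setIntegral (hM.integrable n).abs (by positivity)
  rw [div_mul_eq_mul_div, le_div_iff₀ hx]
  linarith

/-- Truncated Doob maximal inequality: for an integrable martingale `(M_i)_{0≤i≤n}`
with `M₀ = 0`, for every `x > 0`:
`ℙ(max_{1≤i≤n} |M_i| > x) ≤ (2/x) 𝔼[|M_n| 1{|M_n| > x/2}]`. -/
theorem statement14
    {Ω : Type*} {m0 : MeasurableSpace Ω} (P : Measure Ω) [IsProbabilityMeasure P]
    (𝓕 : MeasureTheory.Filtration ℕ m0) (M : ℕ → Ω → ℝ)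
    (hM : Martingale M 𝓕 P) (hM0 : ∀ ω, M 0 ω = 0)
    (n : ℕ) (hn : 1 ≤ n) (x : ℝ) (hx : 0 < x) :
    (P {ω | x < (Finset.Icc 1 n).sup' (Finset.nonempty_Icc.mpr hn)
        (fun i => |M i ω|)}).toReal ≤
      (2 / x) * ∫ ω in {ω | x / 2 < |M n ω|}, |M n ω| ∂P :=
  statement14_general P 𝓕 M hM n hn x hx
end

section
/- Consider the Markov kernel on E = [−1,1] given by Q(x,A) = (1 − |x|)·δ_x(A) + |x|·ν(A), where ν(dx) = |x| dx on [−1,1]. For every odd function f : [−1,1] → ℝ (f(−x) = −f(x)) that is integrable with respect to ν, and for every k ≥ 0 and x ∈ [−1,1]: (Q^k f)(x) = (1 − |x|)^k · f(x), where Q acts on functions by (Qf)(x) = ∫_E f(s) Q(x,ds) and Q^k denotes the k-fold iterate. Equivalently, for the stationary chain (ξ_i) with marginal π(dx) = dx/2, 𝔼(f(ξ_k) | ξ₀) = (1 − |ξ₀|)^k · f(ξ₀) almost surely. -/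
open MeasureTheory Filter
open scoped ENNReal NNReal Topology

/-- The proposal measure `ν(dx) = |x| dx` on `[-1,1]`. -/
noncomputable def nuMH : Measure ℝ :=
  (volume.restrict (Set.Icc (-1 : ℝ) 1)).withDensity fun x => ENNReal.ofReal |x|

/-- The Metropolis–Hastings transition measure
`Q(x, ·) = (1 - |x|) δ_x + |x| ν`. -/
noncomputable def QMH (x : ℝ) : Measure ℝ :=
  ENNReal.ofReal (1 - |x|) • Measure.dirac x + ENNReal.ofReal |x| • nuMH

/-- The action of `Q` on functions: `(Qg)(x) = ∫ g(s) Q(x, ds)`. -/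
noncomputable def QMHop (g : ℝ → ℝ) (x : ℝ) : ℝ := ∫ s, g s ∂(QMH x)

lemma nuMH_compl_Icc : nuMH (Set.Icc (-1 : ℝ) 1)ᶜ = 0 := by
  rw [nuMH, withDensity_apply _ (measurableSet_Icc.compl),
    Measure.restrict_restrict measurableSet_Icc.compl]
  simp

lemma ae_mem_Icc_nuMH : ∀ᵐ x ∂nuMH, x ∈ Set.Icc (-1 : ℝ) 1 := by
  have h : nuMH {x | ¬ x ∈ Set.Icc (-1 : ℝ) 1} = 0 := nuMH_compl_Icc
  exact ae_iff.mpr h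

/-- Integral of an odd measurable function against `nuMH` is zero. -/
lemma integral_odd_nuMH (g : ℝ → ℝ) (hg : Measurable g) (hodd : ∀ x, g (-x) = -g x) :
    ∫ x, g x ∂nuMH = 0 := by
  have hd : Measurable fun x : ℝ => (Real.toNNReal |x| : ℝ≥0) :=
    measurable_real_toNNReal.comp (measurable_abs)
  have hnu : nuMH = (volume.restrict (Set.Icc (-1 : ℝ) 1)).withDensity
      (fun x => ((Real.toNNReal |x| : ℝ≥0) : ℝ≥0∞)) := rfl
  rw [hnu, integral_withDensity_eq_integral_smul hd]
  have h1 : ∫ x in Set.Icc (-1 : ℝ) 1, (Real.toNNReal |x| : ℝ≥0) • g x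
      = ∫ x in (-1 : ℝ)..1, |x| * g x := by
    rw [intervalIntegral.integral_of_le (by norm_num : (-1:ℝ) ≤ 1),
      MeasureTheory.integral_Icc_eq_integral_Ioc]
    refine integral_congr_ae (Filter.Eventually.of_forall fun x => ?_)
    simp [NNReal.smul_def, Real.coe_toNNReal _ (abs_nonneg x)]
  rw [h1]
  have h2 : ∫ x in (-1 : ℝ)..1, |(-x)| * g (-x) = ∫ x in (-1 : ℝ)..1, |x| * g x := by
    simpa using intervalIntegral.integral_comp_neg (a := (-1:ℝ)) (b := 1)
      (f := fun x => |x| * g x)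
  have h3 : ∫ x in (-1 : ℝ)..1, |(-x)| * g (-x) = -∫ x in (-1 : ℝ)..1, |x| * g x := by
    rw [← intervalIntegral.integral_neg]
    congr 1
    funext x
    rw [abs_neg, hodd]
    ring
  linarith [h2, h3]

/-- Key single-step computation for `ν`-integrable `g`. -/
lemma QMHop_eq (g : ℝ → ℝ) (hint : Integrable g nuMH) (x : ℝ) (hx : |x| ≤ 1) :
    QMHop g x = (1 - |x|) * g x + |x| * ∫ s, g s ∂nuMH := by
  have hd : Integrable g (ENNReal.ofReal (1 - |x|) • Measure.dirac x) := by
    have hae : g =ᵐ[Measure.dirac x] fun _ => g x := by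
      rw [Filter.EventuallyEq, ae_iff]
      rw [Measure.dirac_apply]
      simp
    have : Integrable (fun _ => g x) (Measure.dirac x) := integrable_const _
    exact (this.congr hae.symm).smul_measure ENNReal.ofReal_ne_top
  have hn : Integrable g (ENNReal.ofReal |x| • nuMH) :=
    hint.smul_measure ENNReal.ofReal_ne_top
  rw [QMHop, QMH, integral_add_measure hd hn, integral_smul_measure, integral_smul_measure,
    integral_dirac]
  have h : (0:ℝ) ≤ 1 - |x| := by linarith
  rw [ENNReal.toReal_ofReal h, ENNReal.toReal_ofReal (abs_nonneg x)]
  simp [smul_eq_mul]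

/-- For every odd `ν`-integrable function `f` on `[-1,1]` and every `k ≥ 0`,
`(Q^k f)(x) = (1 - |x|)^k f(x)` for all `x ∈ [-1,1]`. -/
theorem statement16
    (f : ℝ → ℝ) (hmeas : Measurable f) (hodd : ∀ x, f (-x) = -f x)
    (hint : Integrable f nuMH) :
    ∀ (k : ℕ) (x : ℝ), x ∈ Set.Icc (-1 : ℝ) 1 →
      (QMHop^[k] f) x = (1 - |x|) ^ k * f x := by
  intro k
  induction k with
  | zero => intro x hx; simp
  | succ k ih =>
    intro x hx
    -- the model function
    set h : ℝ → ℝ := fun y => (1 - |y|) ^ k * f y with hh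
    have hhmeas : Measurable h := by
      apply Measurable.mul _ hmeas
      exact ((measurable_const.sub measurable_abs).pow measurable_const)
    have hhodd : ∀ y, h (-y) = -h y := by
      intro y
      simp only [hh, abs_neg, hodd]
      ring
    have hhint : Integrable h nuMH := by
      refine hint.mono hhmeas.aestronglyMeasurable ?_
      filter_upwards [ae_mem_Icc_nuMH] with y hy
      have hy1 : |y| ≤ 1 := abs_le.mpr ⟨hy.1, hy.2⟩
      have h0 : 0 ≤ 1 - |y| := by linarith
      have h1 : (1 - |y|) ^ k ≤ 1 := pow_le_one₀ h0 (by linarith [abs_nonneg y])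
      simp only [hh, Real.norm_eq_abs, abs_mul]
      calc |(1 - |y|) ^ k| * |f y| ≤ 1 * |f y| := by
            apply mul_le_mul_of_nonneg_right _ (abs_nonneg _)
            rw [abs_of_nonneg (pow_nonneg h0 k)]; exact h1
        _ = |f y| := one_mul _
    have hae : (QMHop^[k] f) =ᵐ[nuMH] h := by
      filter_upwards [ae_mem_Icc_nuMH] with y hy
      exact ih y hy
    have hintk : Integrable (QMHop^[k] f) nuMH := hhint.congr hae.symm
    have hzero : ∫ s, (QMHop^[k] f) s ∂nuMH = 0 := by
      rw [integral_congr_ae hae]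
      exact integral_odd_nuMH h hhmeas hhodd
    rw [Function.iterate_succ_apply', QMHop_eq _ hintk x (abs_le.mpr ⟨hx.1, hx.2⟩), hzero, ih x hx]
    ring
end

section
/- Let (ξ_i)_{i≥0} be the stationary Markov chain on [−1,1] with transition kernel Q(x,A) = (1 − |x|)·δ_x(A) + |x|·ν(A), ν(dx) = |x| dx, and marginal distribution π(dx) = dx/2, and set X_i = sign(ξ_i). Then for every m ≥ 0: 𝔼(X₀ · X_m) = 1/(m+1); equivalently, ∫_{−1}^{1} (1 − |x|)^m · (dx/2) = 1/(m+1). -/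
/-!
Put `f j x = sign x * ((1 - |x|)⁺) ^ j`. Since `ν` is symmetric and `f j` is odd, `ν (f j) = 0`,
so `Q (f j) = (1 - |x|)⁺ * f j = f (j + 1)`. The Markov property says that, restricted to an event
`{ξ 0 ∈ B}`, the law of `ξ (k + 1)` is the law of `ξ k` composed with `Q`; iterating,
`𝔼[sign (ξ m); ξ 0 ∈ B] = ∫_B f m dπ`. Splitting `sign (ξ 0)` into `B = (0, ∞)` and `B = (-∞, 0)`
gives `𝔼[X₀ X_m] = ∫ sign x * f m x dπ = ∫ (1 - |x|) ^ m dπ = 1 / (m + 1)`.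
-/

open MeasureTheory Filter
open scoped ENNReal Topology

/-- The uniform distribution `π(dx) = dx/2` on `[-1,1]`. -/
noncomputable def piMH : Measure ℝ :=
  (volume.restrict (Set.Icc (-1 : ℝ) 1)).withDensity fun _ => ENNReal.ofReal (1 / 2)

/-- The σ-algebra generated by `ξ_0, …, ξ_k`. -/
def pastFilt {Ω : Type*} [MeasurableSpace Ω] (ξ : ℕ → Ω → ℝ) (k : ℕ) :
    MeasurableSpace Ω :=
  ⨆ i ≤ k, MeasurableSpace.comap (ξ i) inferInstance

open Set ProbabilityTheory

section MarkovProperty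

variable {Ω α β : Type*} {m mΩ : MeasurableSpace Ω} [MeasurableSpace α] [MeasurableSpace β]

theorem map_restrict_eq_comp_of_condExp_indicator {P : Measure Ω} [IsFiniteMeasure P]
    (hm : m ≤ mΩ) {X : Ω → α} {Y : Ω → β} (hX : Measurable X)
    (hY : Measurable Y) {κ : Kernel α β} [∀ a, IsFiniteMeasure (κ a)]
    (hκ : ∀ A, MeasurableSet A →
      P[fun ω => A.indicator (fun _ => (1 : ℝ)) (Y ω) | m] =ᵐ[P] fun ω => (κ (X ω) A).toReal)
    {S : Set Ω} (hS : MeasurableSet[m] S) :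
    (P.restrict S).map Y = κ ∘ₘ (P.restrict S).map X := by
  ext A hA
  have hYA : MeasurableSet (Y ⁻¹' A) := hY hA
  have hind : Integrable ((Y ⁻¹' A).indicator 1) P := (integrable_const (1 : ℝ)).indicator hYA
  have hint : Integrable (fun ω => (κ (X ω) A).toReal) P := integrable_condExp.congr (hκ A hA)
  rw [Measure.map_apply hY hA, Measure.bind_apply hA κ.aemeasurable,
    lintegral_map (κ.measurable_coe hA) hX]
  calc (P.restrict S) (Y ⁻¹' A)
      = ENNReal.ofReal (∫ ω in S, (Y ⁻¹' A).indicator 1 ω ∂P) := by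
        rw [integral_indicator_one hYA, measureReal_def, ENNReal.ofReal_toReal
          (measure_ne_top _ _)]
    _ = ENNReal.ofReal (∫ ω in S, (κ (X ω) A).toReal ∂P) := by
        rw [← setIntegral_condExp hm hind hS]
        exact congrArg _ (setIntegral_congr_ae (hm _ hS) ((hκ A hA).mono fun ω h _ => h))
    _ = ∫⁻ ω in S, κ (X ω) A ∂P := by
        rw [ofReal_integral_eq_lintegral_ofReal hint.integrableOn
          (ae_of_all _ fun _ => ENNReal.toReal_nonneg)]
        exact lintegral_congr fun ω => ENNReal.ofReal_toReal (measure_ne_top _ _)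

end MarkovProperty

section KernelIteration

variable {α β : Type*} [MeasurableSpace α] [MeasurableSpace β]

theorem integral_kernel_comp_measure {E : Type*} [NormedAddCommGroup E] [NormedSpace ℝ E]
    {μ : Measure α} {κ : Kernel α β} {f : β → E} (hf : Integrable f (κ ∘ₘ μ)) :
    ∫ y, f y ∂(κ ∘ₘ μ) = ∫ x, ∫ y, f y ∂κ x ∂μ := by
  rw [Measure.comp_eq_comp_const_apply] at hf ⊢
  rw [Kernel.integral_comp hf, Kernel.const_apply]

theorem integral_eq_integral_of_comp_eq {κ : Kernel α α} {μ : ℕ → Measure α}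
    [∀ k, IsFiniteMeasure (μ k)] (hμ : ∀ k, μ (k + 1) = κ ∘ₘ μ k) {f : ℕ → α → ℝ}
    (hf : ∀ j, Measurable (f j)) {C : ℝ} (hC : ∀ j x, |f j x| ≤ C)
    (hκf : ∀ j x, ∫ y, f j y ∂κ x = f (j + 1) x) (k j : ℕ) :
    ∫ x, f j x ∂μ k = ∫ x, f (k + j) x ∂μ 0 := by
  induction k generalizing j with
  | zero => rw [zero_add]
  | succ k ih =>
    have hint : Integrable (f j) (μ (k + 1)) :=
      .of_bound (hf j).aestronglyMeasurable C (ae_of_all _ (hC j))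
    rw [hμ k] at hint ⊢
    simp_rw [integral_kernel_comp_measure hint, hκf]
    rw [ih, add_comm j 1, add_assoc]

end KernelIteration

lemma Real.measurable_sign : Measurable Real.sign :=
  Measurable.ite measurableSet_Iio measurable_const
    (Measurable.ite measurableSet_Ioi measurable_const measurable_const)

lemma Real.abs_sign_le_one (x : ℝ) : |Real.sign x| ≤ 1 := by
  rcases Real.sign_apply_eq x with h | h | h <;> simp [h]

lemma integral_sign_mul_eq_sub {α : Type*} [MeasurableSpace α] {μ : Measure α} {W : α → ℝ}
    (hW : Measurable W) {g : α → ℝ} (hg : Integrable g μ) :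
    ∫ a, Real.sign (W a) * g a ∂μ
      = ∫ a in W ⁻¹' Ioi 0, g a ∂μ - ∫ a in W ⁻¹' Iio 0, g a ∂μ := by
  rw [← integral_indicator (hW measurableSet_Ioi), ← integral_indicator (hW measurableSet_Iio),
    ← integral_sub (hg.indicator (hW measurableSet_Ioi)) (hg.indicator (hW measurableSet_Iio))]
  congr 1 with a
  rcases lt_trichotomy (W a) 0 with h | h | h
  · simp [indicator, h, h.not_gt, Real.sign_of_neg h]
  · simp [indicator, h]
  · simp [indicator, h, h.not_gt, Real.sign_of_pos h]

instance : IsFiniteMeasure nuMH :=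
  isFiniteMeasure_withDensity_ofReal continuous_abs.integrableOn_Icc.hasFiniteIntegral

instance : IsFiniteMeasure piMH :=
  isFiniteMeasure_withDensity_ofReal (integrableOn_const (by simp)).hasFiniteIntegral

lemma measurable_QMH_apply {s : Set ℝ} (hs : MeasurableSet s) :
    Measurable fun x => QMH x s := by
  simp only [QMH, Measure.add_apply, Measure.smul_apply, smul_eq_mul, Measure.dirac_apply' _ hs]
  exact ((by fun_prop : Measurable fun x : ℝ => ENNReal.ofReal (1 - |x|)).mul
    (measurable_const.indicator hs)).add (by fun_prop)

noncomputable def qKernel : Kernel ℝ ℝ where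
  toFun := QMH
  measurable' := Measure.measurable_of_measurable_coe _ fun _ => measurable_QMH_apply

instance (x : ℝ) : IsFiniteMeasure (qKernel x) := by
  have := (Measure.dirac x).smul_finite (ENNReal.ofReal_ne_top (r := 1 - |x|))
  have := nuMH.smul_finite (ENNReal.ofReal_ne_top (r := |x|))
  change IsFiniteMeasure (QMH x)
  unfold QMH
  infer_instance

lemma integral_QMH {f : ℝ → ℝ} (hf : Integrable f nuMH) (x : ℝ) :
    ∫ y, f y ∂QMH x = max (1 - |x|) 0 * f x + |x| * ∫ y, f y ∂nuMH := by
  rw [QMH, integral_add_measure ((integrable_dirac enorm_lt_top).smul_measure ENNReal.ofReal_ne_top)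
      (hf.smul_measure ENNReal.ofReal_ne_top), integral_smul_measure, integral_smul_measure,
    integral_dirac, ENNReal.toReal_ofReal', ENNReal.toReal_ofReal (abs_nonneg x), smul_eq_mul,
    smul_eq_mul]

lemma integral_nuMH_eq_zero_of_odd {f : ℝ → ℝ} (hodd : ∀ x, f (-x) = -f x) :
    ∫ x, f x ∂nuMH = 0 := by
  have hsymm : ∫ x in (-1 : ℝ)..1, |x| * f x = 0 := by
    have h := intervalIntegral.integral_comp_neg (a := -1) (b := 1) fun x => |x| * f x
    simp only [abs_neg, hodd, neg_neg, mul_neg, intervalIntegral.integral_neg] at h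
    linarith
  rw [nuMH, integral_withDensity_eq_integral_toReal_smul (by fun_prop)
      (ae_of_all _ fun _ => ENNReal.ofReal_lt_top), integral_Icc_eq_integral_Ioc,
    ← intervalIntegral.integral_of_le (by norm_num)]
  simpa only [ENNReal.toReal_ofReal (abs_nonneg _), smul_eq_mul] using hsymm

-- The positive part makes `∫ signedDecay j ∂QMH x = signedDecay (j + 1) x` hold for every real `x`,
-- not only on `[-1, 1]`.
noncomputable def signedDecay (j : ℕ) (x : ℝ) : ℝ :=
  Real.sign x * max (1 - |x|) 0 ^ j

lemma measurable_signedDecay (j : ℕ) : Measurable (signedDecay j) :=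
  Real.measurable_sign.mul (by fun_prop)

lemma abs_signedDecay_le_one (j : ℕ) (x : ℝ) : |signedDecay j x| ≤ 1 := by
  have h0 : 0 ≤ max (1 - |x|) 0 := le_max_right _ _
  have h1 : max (1 - |x|) 0 ≤ 1 := max_le (by linarith [abs_nonneg x]) zero_le_one
  rw [signedDecay, abs_mul, abs_of_nonneg (pow_nonneg h0 j)]
  exact mul_le_one₀ (Real.abs_sign_le_one x) (pow_nonneg h0 j) (pow_le_one₀ h0 h1)

lemma signedDecay_zero : signedDecay 0 = Real.sign := by
  ext x
  rw [signedDecay, pow_zero, mul_one]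

lemma integral_signedDecay_QMH (j : ℕ) (x : ℝ) :
    ∫ y, signedDecay j y ∂QMH x = signedDecay (j + 1) x := by
  have hint : Integrable (signedDecay j) nuMH :=
    .of_bound (measurable_signedDecay j).aestronglyMeasurable 1
      (ae_of_all _ (abs_signedDecay_le_one j))
  have hodd : ∀ y, signedDecay j (-y) = -signedDecay j y := fun y => by
    rw [signedDecay, signedDecay, Real.sign_neg, abs_neg, neg_mul]
  rw [integral_QMH hint, integral_nuMH_eq_zero_of_odd hodd, mul_zero, add_zero, signedDecay,
    signedDecay, pow_succ]
  ring

lemma intervalIntegral_one_sub_abs_pow (m : ℕ) :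
    ∫ x in (-1 : ℝ)..1, (1 - |x|) ^ m = 2 / (m + 1) := by
  have hcont : Continuous fun x : ℝ => (1 - |x|) ^ m := by fun_prop
  have hright : ∫ x in (0 : ℝ)..1, (1 - |x|) ^ m = 1 / (m + 1) := by
    rw [intervalIntegral.integral_congr (g := fun x => (1 - x) ^ m) fun x hx => by
      rw [abs_of_nonneg (uIcc_of_le (zero_le_one (α := ℝ)) ▸ hx).1]]
    simp [intervalIntegral.integral_comp_sub_left fun x => x ^ m]
  have hleft : ∫ x in (-1 : ℝ)..0, (1 - |x|) ^ m = ∫ x in (0 : ℝ)..1, (1 - |x|) ^ m := by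
    simpa using (intervalIntegral.integral_comp_neg (a := 0) (b := 1) fun x => (1 - |x|) ^ m).symm
  rw [← intervalIntegral.integral_add_adjacent_intervals (b := 0) (hcont.intervalIntegrable _ _)
    (hcont.intervalIntegrable _ _), hleft, hright]
  ring

lemma integral_piMH_one_sub_abs_pow (m : ℕ) : ∫ x, (1 - |x|) ^ m ∂piMH = 1 / (m + 1) := by
  rw [piMH, withDensity_const, integral_smul_measure, integral_Icc_eq_integral_Ioc,
    ← intervalIntegral.integral_of_le (by norm_num), intervalIntegral_one_sub_abs_pow,
    ENNReal.toReal_ofReal (by norm_num), smul_eq_mul]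
  ring

lemma ae_piMH_mem_Icc_ne_zero : ∀ᵐ x ∂piMH, x ∈ Icc (-1 : ℝ) 1 ∧ x ≠ 0 :=
  (withDensity_absolutelyContinuous _ _).ae_le <|
    (ae_restrict_mem measurableSet_Icc).and (ae_restrict_of_ae (Measure.ae_ne volume 0))

lemma sign_mul_signedDecay {x : ℝ} (hx : x ∈ Icc (-1 : ℝ) 1) (hx0 : x ≠ 0) (m : ℕ) :
    Real.sign x * signedDecay m x = (1 - |x|) ^ m := by
  have hsq : Real.sign x * Real.sign x = 1 := by
    rcases Real.sign_apply_eq_of_ne_zero x hx0 with h | h <;> simp [h]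
  rw [signedDecay, ← mul_assoc, hsq, one_mul, max_eq_left (by linarith [abs_le.mpr hx])]

section StationaryChain

variable {Ω : Type*} [MeasurableSpace Ω] {ξ : ℕ → Ω → ℝ}

lemma pastFilt_le (hmeas : ∀ i, Measurable (ξ i)) (k : ℕ) : pastFilt ξ k ≤ ‹MeasurableSpace Ω› :=
  iSup₂_le fun i _ => (hmeas i).comap_le

lemma measurable_pastFilt {i k : ℕ} (hik : i ≤ k) : Measurable[pastFilt ξ k] (ξ i) :=
  Measurable.of_comap_le (le_iSup₂ (f := fun j (_ : j ≤ k) => MeasurableSpace.comap (ξ j) _) i hik)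

theorem setIntegral_sign_eq_setIntegral_signedDecay {P : Measure Ω} [IsFiniteMeasure P]
    (hmeas : ∀ i, Measurable (ξ i)) (hmarg : P.map (ξ 0) = piMH)
    (hMarkov : ∀ (k : ℕ) (A : Set ℝ), MeasurableSet A →
      (P[fun ω => Set.indicator A (fun _ => (1 : ℝ)) (ξ (k + 1) ω) | pastFilt ξ k])
        =ᵐ[P] fun ω => (QMH (ξ k ω) A).toReal)
    {B : Set ℝ} (hB : MeasurableSet B) (m : ℕ) :
    ∫ ω in ξ 0 ⁻¹' B, Real.sign (ξ m ω) ∂P = ∫ x in B, signedDecay m x ∂piMH := by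
  set μ : ℕ → Measure ℝ := fun k => (P.restrict (ξ 0 ⁻¹' B)).map (ξ k)
  have hμ (k : ℕ) : μ (k + 1) = qKernel ∘ₘ μ k :=
    map_restrict_eq_comp_of_condExp_indicator (m := pastFilt ξ k) (κ := qKernel)
      (pastFilt_le hmeas k) (hmeas k) (hmeas (k + 1))
      (hMarkov k) (measurable_pastFilt (Nat.zero_le k) hB)
  have hμ0 : μ 0 = piMH.restrict B := by rw [← hmarg, Measure.restrict_map (hmeas 0) hB]
  calc ∫ ω in ξ 0 ⁻¹' B, Real.sign (ξ m ω) ∂P = ∫ x, signedDecay 0 x ∂μ m := by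
        rw [integral_map (hmeas m).aemeasurable (measurable_signedDecay 0).aestronglyMeasurable,
          signedDecay_zero]
    _ = ∫ x, signedDecay m x ∂μ 0 :=
        integral_eq_integral_of_comp_eq hμ measurable_signedDecay abs_signedDecay_le_one
          integral_signedDecay_QMH m 0
    _ = ∫ x in B, signedDecay m x ∂piMH := by rw [hμ0]

end StationaryChain

/-- For the stationary Metropolis–Hastings chain with kernel `Q`, marginal
`π(dx) = dx/2` on `[-1,1]`, and `X_i = sign(ξ_i)`:
`𝔼(X₀ X_m) = 1/(m+1)`; equivalently `∫ (1-|x|)^m π(dx) = 1/(m+1)`. -/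
theorem statement17
    {Ω : Type*} [MeasurableSpace Ω] (P : Measure Ω) [IsProbabilityMeasure P]
    (ξ : ℕ → Ω → ℝ)
    (hmeas : ∀ i, Measurable (ξ i))
    (hmarg : ∀ i, P.map (ξ i) = piMH)
    (hMarkov : ∀ (k : ℕ) (A : Set ℝ), MeasurableSet A →
      (P[fun ω => Set.indicator A (fun _ => (1 : ℝ)) (ξ (k + 1) ω) | pastFilt ξ k])
        =ᵐ[P] fun ω => (QMH (ξ k ω) A).toReal)
    (m : ℕ) :
    (∫ ω, Real.sign (ξ 0 ω) * Real.sign (ξ m ω) ∂P = 1 / (m + 1)) ∧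
    (∫ x, (1 - |x|) ^ m ∂piMH = 1 / (m + 1)) := by
  have hsetIntegral {B : Set ℝ} (hB : MeasurableSet B) :=
    setIntegral_sign_eq_setIntegral_signedDecay hmeas (hmarg 0) hMarkov hB m
  have hsign_int : Integrable (fun ω => Real.sign (ξ m ω)) P :=
    .of_bound (Real.measurable_sign.comp (hmeas m)).aestronglyMeasurable 1
      (ae_of_all _ fun ω => Real.abs_sign_le_one _)
  refine ⟨?_, integral_piMH_one_sub_abs_pow m⟩
  calc ∫ ω, Real.sign (ξ 0 ω) * Real.sign (ξ m ω) ∂P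
      = ∫ x in Ioi 0, signedDecay m x ∂piMH - ∫ x in Iio 0, signedDecay m x ∂piMH := by
        rw [integral_sign_mul_eq_sub (hmeas 0) hsign_int, hsetIntegral measurableSet_Ioi,
          hsetIntegral measurableSet_Iio]
    _ = ∫ x, Real.sign x * signedDecay m x ∂piMH :=
        (integral_sign_mul_eq_sub measurable_id (.of_bound
          (measurable_signedDecay m).aestronglyMeasurable 1
          (ae_of_all _ (abs_signedDecay_le_one m)))).symm
    _ = ∫ x, (1 - |x|) ^ m ∂piMH := integral_congr_ae <|
        ae_piMH_mem_Icc_ne_zero.mono fun x hx => sign_mul_signedDecay hx.1 hx.2 m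
    _ = 1 / (m + 1) := integral_piMH_one_sub_abs_pow m
end

section
/- Let (ξ_i)_{i≥0} be the stationary Markov chain on [−1,1] with transition kernel Q(x,A) = (1 − |x|)·δ_x(A) + |x|·ν(A), ν(dx) = |x| dx, and marginal distribution π(dx) = dx/2; set X_i = sign(ξ_i), S_n = Σ_{i=1}^n X_i and σ_n² = 𝔼 S_n². Then σ_n²/(2n log n) → 1 as n → ∞. -/
open MeasureTheory Filter
open scoped ENNReal Topology

/-- Partial sums `S_n = X_1 + ⋯ + X_n` with `X_i = sign(ξ_i)`. -/
noncomputable def SpartMH {Ω : Type*} (ξ : ℕ → Ω → ℝ) (n : ℕ) (ω : Ω) : ℝ :=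
  ∑ i ∈ Finset.Icc 1 n, Real.sign (ξ i ω)

/-!
Put `h_m(x) = (1 - |x|)₊ ^ m · sign x`, so that `h_0 = sign`. Since `h_m` is odd and `ν` is
symmetric, `∫ h_m dν = 0`, hence `Q h_m = (1 - |x|) h_m = h_{m+1}` on `[-1, 1]`; by the Markov
property, `𝔼[h_m(ξ_{k+1}) | ξ_0, …, ξ_k] = h_{m+1}(ξ_k)`. Iterating `d` times,
`𝔼[X_j X_{j+d}] = ∫ sign · h_d dπ = 1/(d+1)`. Summing over `1 ≤ i, l ≤ n` gives
`σ_n² = 2 (n + 1) H_n - 3 n`, and `H_n ~ log n`.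
-/

namespace MetropolisHastings

@[fun_prop]
theorem measurable_sign : Measurable Real.sign :=
  Measurable.ite measurableSet_Iio measurable_const
    (Measurable.ite measurableSet_Ioi measurable_const measurable_const)

noncomputable def signDecay (m : ℕ) (x : ℝ) : ℝ := max (1 - |x|) 0 ^ m * Real.sign x

@[fun_prop]
theorem measurable_signDecay (m : ℕ) : Measurable (signDecay m) := by
  unfold signDecay
  fun_prop

theorem abs_sign_le_one (x : ℝ) : |Real.sign x| ≤ 1 := by
  rcases Real.sign_apply_eq x with h | h | h <;> simp [h]

theorem abs_signDecay_le_one (m : ℕ) (x : ℝ) : |signDecay m x| ≤ 1 := by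
  have hmax : max (1 - |x|) 0 ≤ 1 := max_le (by linarith [abs_nonneg x]) zero_le_one
  rw [signDecay, abs_mul, abs_pow, abs_of_nonneg (le_max_right _ _)]
  exact mul_le_one₀ (pow_le_one₀ (le_max_right _ _) hmax) (abs_nonneg _) (abs_sign_le_one x)

theorem signDecay_zero (x : ℝ) : signDecay 0 x = Real.sign x := by
  rw [signDecay, pow_zero, one_mul]

theorem signDecay_succ (m : ℕ) (x : ℝ) :
    signDecay (m + 1) x = max (1 - |x|) 0 * signDecay m x := by
  rw [signDecay, signDecay, pow_succ]; ring

theorem signDecay_neg (m : ℕ) (x : ℝ) : signDecay m (-x) = -signDecay m x := by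
  rw [signDecay, signDecay, abs_neg, Real.sign_neg, mul_neg]

theorem integrable_signDecay_comp {α : Type*} [MeasurableSpace α] {μ : Measure α}
    [IsFiniteMeasure μ] (m : ℕ) {f : α → ℝ} (hf : Measurable f) :
    Integrable (fun a => signDecay m (f a)) μ :=
  .of_bound ((measurable_signDecay m).comp hf).aestronglyMeasurable 1
    (.of_forall fun a => (Real.norm_eq_abs _).trans_le (abs_signDecay_le_one m (f a)))

theorem intervalIntegral_eq_zero_of_odd {f : ℝ → ℝ} (hf : ∀ x, f (-x) = -f x) (a : ℝ) :
    ∫ x in -a..a, f x = 0 := by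
  have h := intervalIntegral.integral_comp_neg (a := -a) (b := a) f
  simp only [hf, intervalIntegral.integral_neg, neg_neg] at h
  linarith

theorem setIntegral_Icc_eq_intervalIntegral {a b : ℝ} (hab : a ≤ b) (f : ℝ → ℝ) :
    ∫ x in Set.Icc a b, f x = ∫ x in a..b, f x := by
  rw [integral_Icc_eq_integral_Ioc, intervalIntegral.integral_of_le hab]

instance : IsFiniteMeasure nuMH := by
  unfold nuMH
  exact isFiniteMeasure_withDensity_ofReal continuous_abs.integrableOn_Icc.2

theorem integral_nuMH_signDecay (m : ℕ) : ∫ x, signDecay m x ∂nuMH = 0 := by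
  rw [nuMH, integral_withDensity_eq_integral_toReal_smul (by fun_prop)
    (.of_forall fun _ => ENNReal.ofReal_lt_top), setIntegral_Icc_eq_intervalIntegral (by norm_num)]
  refine intervalIntegral_eq_zero_of_odd (fun x => ?_) 1
  simp [signDecay_neg]

theorem integral_piMH_sign_mul_signDecay (m : ℕ) :
    ∫ x, Real.sign x * signDecay m x ∂piMH = 1 / (m + 1) := by
  set g : ℝ → ℝ := fun x => (1 - |x|) ^ m
  have hg_int : ∀ a b, IntervalIntegrable g volume a b := fun a b => by
    apply Continuous.intervalIntegrable; fun_prop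
  have hsign : ∀ᵐ x, x ∈ Set.uIoc (-1 : ℝ) 1 → Real.sign x * signDecay m x = g x := by
    filter_upwards [Measure.ae_ne volume 0] with x hx0 hx
    rw [Set.uIoc_of_le (by norm_num)] at hx
    have hx1 : |x| ≤ 1 := abs_le.2 ⟨hx.1.le, hx.2⟩
    rcases Real.sign_apply_eq_of_ne_zero x hx0 with h | h <;>
      simp [signDecay, g, h, max_eq_left (sub_nonneg.2 hx1)]
  have hhalf : ∫ x in (0 : ℝ)..1, g x = 1 / (m + 1) := by
    rw [intervalIntegral.integral_congr (g := fun x => (1 - x) ^ m) fun x hx => by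
        rw [Set.uIcc_of_le zero_le_one] at hx; simp [g, abs_of_nonneg hx.1],
      intervalIntegral.integral_comp_sub_left (fun x => x ^ m)]
    simp [integral_pow]
  have hsymm : ∫ x in (-1 : ℝ)..0, g x = ∫ x in (0 : ℝ)..1, g x := by
    simpa [g] using (intervalIntegral.integral_comp_neg (a := 0) (b := 1) g).symm
  rw [piMH, withDensity_const, integral_smul_measure,
    setIntegral_Icc_eq_intervalIntegral (by norm_num), intervalIntegral.integral_congr_ae hsign,
    ← intervalIntegral.integral_add_adjacent_intervals (hg_int _ _) (hg_int _ _), hsymm, hhalf]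
  norm_num
  ring

open Finset

theorem sum_Icc_one_eq_sum_range {M : Type*} [AddCommMonoid M] (n : ℕ) (f : ℕ → M) :
    ∑ i ∈ Icc 1 n, f i = ∑ i ∈ range n, f (i + 1) := by
  rw [range_eq_Ico, sum_Ico_add', zero_add, Ico_add_one_right_eq_Icc]

theorem sum_range_one_div_dist_add_one (n : ℕ) :
    ∑ l ∈ range n, 1 / ((Nat.dist n l : ℝ) + 1) = harmonic (n + 1) - 1 := by
  rw [← sum_range_reflect, harmonic, sum_range_succ']
  push_cast
  rw [inv_one, add_sub_cancel_right]
  refine sum_congr rfl fun j hj => ?_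
  rw [mem_range] at hj
  rw [Nat.dist_eq_sub_of_le_right (by omega), show n - (n - 1 - j) = j + 1 by omega]
  push_cast
  ring

theorem sum_range_sum_range_one_div_dist_add_one (n : ℕ) :
    ∑ i ∈ range n, ∑ l ∈ range n, 1 / ((Nat.dist i l : ℝ) + 1)
      = 2 * (n + 1) * harmonic n - 3 * n := by
  induction n with
  | zero => simp
  | succ n ih =>
    simp only [sum_range_succ, sum_add_distrib, ih, Nat.dist_self]
    simp only [Nat.dist_comm _ n, sum_range_one_div_dist_add_one, harmonic_succ]
    push_cast
    field_simp
    ring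

theorem tendsto_harmonic_div_log :
    Tendsto (fun n : ℕ => (harmonic n : ℝ) / Real.log n) atTop (𝓝 1) := by
  have hlog := Real.tendsto_log_atTop.comp tendsto_natCast_atTop_atTop
  have h := (Real.tendsto_harmonic_sub_log.div_atTop hlog).add_const 1
  rw [zero_add] at h
  refine h.congr' ?_
  filter_upwards [hlog.eventually_gt_atTop 0] with n hn
  simp only [Function.comp_apply] at hn ⊢
  field_simp
  ring

theorem tendsto_variance_div :
    Tendsto (fun n : ℕ => (2 * (n + 1) * (harmonic n : ℝ) - 3 * n) / (2 * n * Real.log n))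
      atTop (𝓝 1) := by
  have hlog := Real.tendsto_log_atTop.comp tendsto_natCast_atTop_atTop
  have hfrac : Tendsto (fun n : ℕ => ((n : ℝ) + 1) / n) atTop (𝓝 1) := by
    simpa using (tendsto_natCast_div_add_atTop (1 : ℝ)).inv₀ one_ne_zero
  have h := (hfrac.mul tendsto_harmonic_div_log).sub
    ((tendsto_const_nhds (x := (3 / 2 : ℝ))).div_atTop hlog)
  rw [one_mul, sub_zero] at h
  refine h.congr' ?_
  filter_upwards [hlog.eventually_gt_atTop 0, eventually_gt_atTop 0] with n hlogn hn
  simp only [Function.comp_apply] at hlogn ⊢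
  field_simp

instance (x : ℝ) : IsFiniteMeasure (QMH x) := by
  constructor
  simp [QMH, ENNReal.mul_lt_top, measure_lt_top]

section Chain

variable {Ω : Type*} [MeasurableSpace Ω] {P : Measure Ω} {ξ : ℕ → Ω → ℝ}

theorem measurable_pastFilt {j k : ℕ} (hjk : j ≤ k) : Measurable[pastFilt ξ k] (ξ j) :=
  measurable_iff_comap_le.2
    (le_iSup₂ (f := fun i (_ : i ≤ k) => MeasurableSpace.comap (ξ i) inferInstance) j hjk)

theorem pastFilt_le (hξ : ∀ i, Measurable (ξ i)) (k : ℕ) :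
    pastFilt ξ k ≤ ‹MeasurableSpace Ω› :=
  iSup₂_le fun i _ => (hξ i).comap_le

structure IsMHChain (P : Measure Ω) (ξ : ℕ → Ω → ℝ) : Prop where
  measurable : ∀ i, Measurable (ξ i)
  map_eq : ∀ i, P.map (ξ i) = piMH
  condExp_indicator : ∀ (k : ℕ) (A : Set ℝ), MeasurableSet A →
    (P[fun ω => Set.indicator A (fun _ => (1 : ℝ)) (ξ (k + 1) ω) | pastFilt ξ k])
      =ᵐ[P] fun ω => (QMH (ξ k ω) A).toReal

namespace IsMHChain

variable [IsFiniteMeasure P]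

theorem measure_inter_preimage_succ (hξ : IsMHChain P ξ) (k : ℕ) {A : Set ℝ}
    (hA : MeasurableSet A) {B : Set Ω} (hB : MeasurableSet[pastFilt ξ k] B) :
    P (ξ (k + 1) ⁻¹' A ∩ B) = ∫⁻ ω in B, QMH (ξ k ω) A ∂P := by
  have hle := pastFilt_le hξ.measurable k
  have hpre : MeasurableSet (ξ (k + 1) ⁻¹' A) := hξ.measurable (k + 1) hA
  have hind : Integrable (fun ω => A.indicator (fun _ => (1 : ℝ)) (ξ (k + 1) ω)) P :=
    (integrable_indicator_iff hpre).2 (integrable_const 1).integrableOn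
  have hQ : Integrable (fun ω => (QMH (ξ k ω) A).toReal) P :=
    integrable_condExp.congr (hξ.condExp_indicator k A hA)
  calc P (ξ (k + 1) ⁻¹' A ∩ B)
      = ENNReal.ofReal (∫ ω in B, A.indicator (fun _ => (1 : ℝ)) (ξ (k + 1) ω) ∂P) := by
        rw [show (fun ω => A.indicator (fun _ => (1 : ℝ)) (ξ (k + 1) ω))
            = (ξ (k + 1) ⁻¹' A).indicator 1 from rfl, integral_indicator_one hpre,
          measureReal_restrict_apply hpre, ofReal_measureReal]
    _ = ENNReal.ofReal (∫ ω in B, (QMH (ξ k ω) A).toReal ∂P) := by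
        rw [← setIntegral_condExp hle hind hB,
          setIntegral_congr_ae (hle B hB) ((hξ.condExp_indicator k A hA).mono fun _ h _ => h)]
    _ = ∫⁻ ω in B, QMH (ξ k ω) A ∂P := by
        rw [ofReal_integral_eq_lintegral_ofReal hQ.integrableOn
          (.of_forall fun _ => ENNReal.toReal_nonneg)]
        simp_rw [ENNReal.ofReal_toReal (measure_ne_top _ _)]

theorem map_restrict_succ (hξ : IsMHChain P ξ) (k : ℕ) {B : Set Ω}
    (hB : MeasurableSet[pastFilt ξ k] B) :
    (P.restrict B).map (ξ (k + 1))
      = ((P.restrict B).map (ξ k)).withDensity (fun x => ENNReal.ofReal (1 - |x|))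
        + (∫⁻ ω in B, ENNReal.ofReal |ξ k ω| ∂P) • nuMH := by
  have hk := hξ.measurable k
  ext A hA
  have hQ : ∀ x, QMH x A = A.indicator (fun y => ENNReal.ofReal (1 - |y|)) x
      + ENNReal.ofReal |x| * nuMH A := fun x => by
    by_cases hx : x ∈ A <;> simp [QMH, Measure.dirac_apply' x hA, hx]
  rw [Measure.map_apply (hξ.measurable (k + 1)) hA, Measure.restrict_apply (hξ.measurable _ hA),
    hξ.measure_inter_preimage_succ k hA hB, Measure.add_apply, withDensity_apply _ hA,
    ← lintegral_indicator hA, lintegral_map (by fun_prop) hk, Measure.smul_apply, smul_eq_mul]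
  simp_rw [hQ]
  rw [lintegral_add_left (by fun_prop), lintegral_mul_const _ (by fun_prop)]

theorem setIntegral_signDecay_succ (hξ : IsMHChain P ξ) (k m : ℕ) {B : Set Ω}
    (hB : MeasurableSet[pastFilt ξ k] B) :
    ∫ ω in B, signDecay m (ξ (k + 1) ω) ∂P = ∫ ω in B, signDecay (m + 1) (ξ k ω) ∂P := by
  have hint : Integrable (signDecay m) ((P.restrict B).map (ξ (k + 1))) :=
    integrable_signDecay_comp m measurable_id
  rw [hξ.map_restrict_succ k hB, integrable_add_measure] at hint
  rw [← integral_map (hξ.measurable _).aemeasurable (measurable_signDecay m).aestronglyMeasurable,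
    hξ.map_restrict_succ k hB, integral_add_measure hint.1 hint.2, integral_smul_measure,
    integral_nuMH_signDecay, smul_zero, add_zero,
    integral_withDensity_eq_integral_toReal_smul (by fun_prop)
      (.of_forall fun _ => ENNReal.ofReal_lt_top)]
  simp_rw [ENNReal.toReal_ofReal', smul_eq_mul, ← signDecay_succ]
  exact integral_map (hξ.measurable k).aemeasurable (measurable_signDecay _).aestronglyMeasurable

theorem condExp_signDecay_succ (hξ : IsMHChain P ξ) (k m : ℕ) :
    P[fun ω => signDecay m (ξ (k + 1) ω) | pastFilt ξ k]
      =ᵐ[P] fun ω => signDecay (m + 1) (ξ k ω) :=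
  (ae_eq_condExp_of_forall_setIntegral_eq (pastFilt_le hξ.measurable k)
    (integrable_signDecay_comp m (hξ.measurable _))
    (fun _ _ _ => (integrable_signDecay_comp _ (hξ.measurable k)).integrableOn)
    (fun _ hB _ => (hξ.setIntegral_signDecay_succ k m hB).symm)
    ((measurable_signDecay _).comp (measurable_pastFilt le_rfl)).aestronglyMeasurable).symm

theorem integral_sign_mul_signDecay_succ (hξ : IsMHChain P ξ) {j k : ℕ} (hjk : j ≤ k) (m : ℕ) :
    ∫ ω, Real.sign (ξ j ω) * signDecay m (ξ (k + 1) ω) ∂P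
      = ∫ ω, Real.sign (ξ j ω) * signDecay (m + 1) (ξ k ω) ∂P := by
  have hle := pastFilt_le hξ.measurable k
  have hsign : StronglyMeasurable[pastFilt ξ k] fun ω => Real.sign (ξ j ω) :=
    (measurable_sign.comp (measurable_pastFilt hjk)).stronglyMeasurable
  have hdecay := integrable_signDecay_comp (μ := P) m (hξ.measurable (k + 1))
  have hint : Integrable (fun ω => Real.sign (ξ j ω) * signDecay m (ξ (k + 1) ω)) P :=
    hdecay.bdd_mul (hsign.mono hle).aestronglyMeasurable
      (.of_forall fun ω => (Real.norm_eq_abs _).trans_le (abs_sign_le_one _))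
  have hpull : P[fun ω => Real.sign (ξ j ω) * signDecay m (ξ (k + 1) ω) | pastFilt ξ k]
      =ᵐ[P] fun ω =>
        Real.sign (ξ j ω) * (P[fun ω => signDecay m (ξ (k + 1) ω) | pastFilt ξ k]) ω :=
    condExp_mul_of_stronglyMeasurable_left hsign hint hdecay
  calc ∫ ω, Real.sign (ξ j ω) * signDecay m (ξ (k + 1) ω) ∂P
      = ∫ ω, (P[fun ω => Real.sign (ξ j ω) * signDecay m (ξ (k + 1) ω) | pastFilt ξ k]) ω ∂P :=
        (integral_condExp hle).symm
    _ = ∫ ω, Real.sign (ξ j ω) * signDecay (m + 1) (ξ k ω) ∂P := by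
        refine integral_congr_ae ?_
        filter_upwards [hpull, hξ.condExp_signDecay_succ k m] with ω h1 h2
        rw [h1, h2]

theorem integral_sign_mul_signDecay_add (hξ : IsMHChain P ξ) (j d m : ℕ) :
    ∫ ω, Real.sign (ξ j ω) * signDecay m (ξ (j + d) ω) ∂P
      = ∫ ω, Real.sign (ξ j ω) * signDecay (m + d) (ξ j ω) ∂P := by
  induction d generalizing m with
  | zero => rfl
  | succ d ih =>
    rw [← add_assoc, hξ.integral_sign_mul_signDecay_succ (Nat.le_add_right j d), ih,
      add_right_comm, add_assoc]

theorem integral_sign_mul_sign_of_le (hξ : IsMHChain P ξ) {i l : ℕ} (hil : i ≤ l) :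
    ∫ ω, Real.sign (ξ i ω) * Real.sign (ξ l ω) ∂P = 1 / ((Nat.dist i l : ℝ) + 1) := by
  obtain ⟨d, rfl⟩ := Nat.exists_eq_add_of_le hil
  calc ∫ ω, Real.sign (ξ i ω) * Real.sign (ξ (i + d) ω) ∂P
      = ∫ ω, Real.sign (ξ i ω) * signDecay 0 (ξ (i + d) ω) ∂P := by simp_rw [signDecay_zero]
    _ = ∫ x, Real.sign x * signDecay d x ∂piMH := by
        rw [hξ.integral_sign_mul_signDecay_add, zero_add, ← hξ.map_eq i,
          integral_map (hξ.measurable i).aemeasurable (by fun_prop)]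
    _ = 1 / ((Nat.dist i (i + d) : ℝ) + 1) := by
        rw [integral_piMH_sign_mul_signDecay, Nat.dist_eq_sub_of_le hil, Nat.add_sub_cancel_left]

theorem integral_sign_mul_sign (hξ : IsMHChain P ξ) (i l : ℕ) :
    ∫ ω, Real.sign (ξ i ω) * Real.sign (ξ l ω) ∂P = 1 / ((Nat.dist i l : ℝ) + 1) := by
  rcases le_total i l with hil | hli
  · exact hξ.integral_sign_mul_sign_of_le hil
  · simp_rw [mul_comm (Real.sign (ξ i _)), Nat.dist_comm i]
    exact hξ.integral_sign_mul_sign_of_le hli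

theorem integral_SpartMH_sq (hξ : IsMHChain P ξ) (n : ℕ) :
    ∫ ω, SpartMH ξ n ω ^ 2 ∂P = 2 * (n + 1) * harmonic n - 3 * n := by
  have hint : ∀ i l, Integrable (fun ω => Real.sign (ξ i ω) * Real.sign (ξ l ω)) P := fun i l =>
    .of_bound ((measurable_sign.comp (hξ.measurable i)).mul
      (measurable_sign.comp (hξ.measurable l))).aestronglyMeasurable 1 (.of_forall fun ω => by
      rw [Real.norm_eq_abs, abs_mul]
      exact mul_le_one₀ (abs_sign_le_one _) (abs_nonneg _) (abs_sign_le_one _))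
  simp_rw [SpartMH, sq, sum_mul_sum]
  rw [integral_finsetSum _ fun i _ => integrable_finsetSum _ fun l _ => hint i l]
  simp_rw [integral_finsetSum _ fun l _ => hint _ l, hξ.integral_sign_mul_sign,
    sum_Icc_one_eq_sum_range, Nat.dist_add_add_right]
  exact sum_range_sum_range_one_div_dist_add_one n

end IsMHChain
end Chain

end MetropolisHastings

/-- For the stationary Metropolis–Hastings chain with kernel `Q`, marginal
`π(dx) = dx/2` on `[-1,1]`, and `X_i = sign(ξ_i)`, `S_n = X_1 + ⋯ + X_n`:
`σ_n²/(2 n log n) → 1` as `n → ∞`, where `σ_n² = 𝔼 S_n²`. -/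
theorem statement18
    {Ω : Type*} [MeasurableSpace Ω] (P : Measure Ω) [IsProbabilityMeasure P]
    (ξ : ℕ → Ω → ℝ)
    (hmeas : ∀ i, Measurable (ξ i))
    (hmarg : ∀ i, P.map (ξ i) = piMH)
    (hMarkov : ∀ (k : ℕ) (A : Set ℝ), MeasurableSet A →
      (P[fun ω => Set.indicator A (fun _ => (1 : ℝ)) (ξ (k + 1) ω) | pastFilt ξ k])
        =ᵐ[P] fun ω => (QMH (ξ k ω) A).toReal) :
    Tendsto (fun n : ℕ =>
        (∫ ω, (SpartMH ξ n ω) ^ 2 ∂P) / (2 * n * Real.log n)) atTop (𝓝 1) := by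
  have hξ : MetropolisHastings.IsMHChain P ξ := ⟨hmeas, hmarg, hMarkov⟩
  simpa only [hξ.integral_SpartMH_sq] using MetropolisHastings.tendsto_variance_div
end
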